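/- arXiv:2104.01415 — 2 statements merged into one kernel-verified Lean document; each statement's English description precedes it below -/
import Mathlib

section
/- The dual weights w* are related to the weights w by conjugation: w*_{u;s}(i,l;k,j) = s^{-2l} · [(q;q)_i/(s²;q)_i] · [(s²;q)_k/(q;q)_k] · w_{u;s}(k,j;i,l) for all i,k ∈ ℤ_{≥0} and j,l ∈ {0,1}. -/
/-- The q-Pochhammer symbol `(x;q)_n = ∏_{i=1}^n (1 - x q^{i-1})`. -/
noncomputable def qp (q x : ℂ) (n : ℕ) : ℂ := ∏ r ∈ Finset.range n, (1 - x * q ^ r)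

/-- Higher spin vertex weights `w_{u;s}(i,j;k,l)`: bottom `i`, left `j`, top `k`,
right `l`; zero unless `i + j = k + l` with `j,l ∈ {0,1}`. -/
noncomputable def whs (q u s : ℂ) (i j k l : ℕ) : ℂ :=
  if j = 0 ∧ l = 0 ∧ k = i then (1 - s * u * q ^ i) / (1 - s * u)
  else if j = 0 ∧ l = 1 ∧ k + 1 = i then (q ^ i - 1) * s * u / (1 - s * u)
  else if j = 1 ∧ l = 0 ∧ k = i + 1 then (1 - s ^ 2 * q ^ i) / (1 - s * u)
  else if j = 1 ∧ l = 1 ∧ k = i then (s ^ 2 * q ^ i - s * u) / (1 - s * u)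
  else 0

/-- Dual higher spin vertex weights `w*_{u;s}`: bottom `i`, left `j`, top `k`,
right `l`; zero unless `i + l = k + j` with `j,l ∈ {0,1}`. -/
noncomputable def whsDual (q u s : ℂ) (i j k l : ℕ) : ℂ :=
  if j = 0 ∧ l = 0 ∧ k = i then (1 - s * u * q ^ i) / (1 - s * u)
  else if j = 0 ∧ l = 1 ∧ k = i + 1 then (-(s⁻¹ * u) * (1 - s ^ 2 * q ^ i)) / (1 - s * u)
  else if j = 1 ∧ l = 0 ∧ k + 1 = i then (1 - q ^ i) / (1 - s * u)
  else if j = 1 ∧ l = 1 ∧ k = i then (q ^ i - s⁻¹ * u) / (1 - s * u)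
  else 0

/-!
Both weight tables are supported on the same four configurations: the dual conservation law
`i + l = k + j` is the ordinary one with bottom and top swapped. On each of them the Pochhammer
factor collapses to `1` (when `k = i`) or to a single ratio `(1 - s²qⁿ)/(1 - qⁿ⁺¹)` or its inverse
(when `k = i ± 1`), and the identity becomes a rational one.
-/

lemma qp_succ (q x : ℂ) (n : ℕ) : qp q x (n + 1) = qp q x n * (1 - x * q ^ n) :=
  Finset.prod_range_succ _ _

lemma qp_ne_zero_of_succ {q a : ℂ} {n : ℕ} (h : qp q a (n + 1) ≠ 0) : qp q a n ≠ 0 :=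
  left_ne_zero_of_mul (qp_succ q a n ▸ h)

lemma one_sub_mul_pow_ne_zero_of_qp_succ {q a : ℂ} {n : ℕ} (h : qp q a (n + 1) ≠ 0) :
    1 - a * q ^ n ≠ 0 :=
  right_ne_zero_of_mul (qp_succ q a n ▸ h)

lemma qp_ratio_self {q a b : ℂ} {n : ℕ} (ha : qp q a n ≠ 0) (hb : qp q b n ≠ 0) :
    qp q a n / qp q b n * (qp q b n / qp q a n) = 1 := by
  rw [div_mul_div_cancel₀ hb, div_self ha]

lemma qp_ratio_succ {q a b : ℂ} {n : ℕ} (hb : qp q b n ≠ 0) (ha : qp q a (n + 1) ≠ 0) :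
    qp q a n / qp q b n * (qp q b (n + 1) / qp q a (n + 1)) =
      (1 - b * q ^ n) / (1 - a * q ^ n) := by
  have ha₀ := qp_ne_zero_of_succ ha
  have ha₁ := one_sub_mul_pow_ne_zero_of_qp_succ ha
  rw [qp_succ, qp_succ]
  field_simp

theorem stmt6_general (q u s : ℂ) (hs : s ≠ 0)
    (i k : ℕ) (j l : ℕ)
    (h1 : qp q (s ^ 2) i ≠ 0) (h2 : qp q q k ≠ 0) :
    whsDual q u s i j k l
      = (s⁻¹) ^ (2 * l) * (qp q q i / qp q (s ^ 2) i) * (qp q (s ^ 2) k / qp q q k) *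
          whs q u s k j i l := by
  unfold whsDual whs
  split_ifs <;> try omega
  · obtain ⟨-, rfl, rfl⟩ := ‹j = 0 ∧ l = 0 ∧ k = i›
    rw [mul_assoc (s⁻¹ ^ _), qp_ratio_self h2 h1, Nat.mul_zero, pow_zero, one_mul, one_mul]
  · obtain ⟨-, rfl, rfl⟩ := ‹j = 0 ∧ l = 1 ∧ k = i + 1›
    have hq := one_sub_mul_pow_ne_zero_of_qp_succ h2
    rw [mul_assoc (s⁻¹ ^ _), qp_ratio_succ h1 h2, pow_succ' q i, ← mul_div_assoc, Nat.mul_one]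
    congr 1
    rw [← neg_sub 1 (q * q ^ i)]
    generalize 1 - q * q ^ i = d at hq ⊢
    field_simp
  · obtain ⟨-, rfl, rfl⟩ := ‹j = 1 ∧ l = 0 ∧ k + 1 = i›
    have hs' := one_sub_mul_pow_ne_zero_of_qp_succ h1
    rw [mul_assoc (s⁻¹ ^ _), mul_comm (_ / _), qp_ratio_succ h2 h1, pow_succ' q k, ← mul_div_assoc,
      Nat.mul_zero, pow_zero, one_mul]
    congr 1
    exact (div_mul_cancel₀ _ hs').symm
  · obtain ⟨-, rfl, rfl⟩ := ‹j = 1 ∧ l = 1 ∧ k = i›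
    rw [mul_assoc (s⁻¹ ^ _), qp_ratio_self h2 h1, ← mul_div_assoc, Nat.mul_one]
    congr 1
    field_simp
  · rw [mul_zero]

/-- Conjugation relation between dual and ordinary higher spin weights:
`w*_{u;s}(i,l;k,j) = s^{-2l} (q;q)_i/(s²;q)_i · (s²;q)_k/(q;q)_k · w_{u;s}(k,j;i,l)`. -/
theorem stmt6 (q u s : ℂ) (hs : s ≠ 0) (hsu : s * u ≠ 1)
    (i k : ℕ) (j l : ℕ) (hj : j ≤ 1) (hl : l ≤ 1)
    (h1 : qp q (s ^ 2) i ≠ 0) (h2 : qp q q k ≠ 0) :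
    whsDual q u s i j k l
      = (s⁻¹) ^ (2 * l) * (qp q q i / qp q (s ^ 2) i) * (qp q (s ^ 2) k / qp q q k) *
          whs q u s k j i l :=
  stmt6_general q u s hs i k j l h1 h2
end

section
/- One-variable skew inhomogeneous spin q-Whittaker function: if μ ≺ λ (i.e., λ_1 ≥ μ_1 ≥ λ_2 ≥ μ_2 ≥ ...), then 𝔽_{λ/μ}(κ | Ξ, S) = (-κ)^{|λ|-|μ|} Π_{i≥1} ξ_{i-1}^{μ_i - λ_i} (s_i ξ_i / (s_{i-1} ξ_{i-1}))^{μ_i/2} · (κ^{-1}s_iξ_i;q)_{λ_i-μ_i} (κ s_i/ξ_i;q)_{μ_i-λ_{i+1}} (q;q)_{λ_i-λ_{i+1}} / [(q;q)_{λ_i-μ_i} (q;q)_{μ_i-λ_{i+1}} (s_i²;q)_{λ_i-λ_{i+1}}]; otherwise 𝔽_{λ/μ}(κ | Ξ, S) = 0. -/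
/-- The q-Hahn vertex weight `W_{t,s}(i,j;k,l)` with `t² = t2`, `s² = s2`, allowing
integer labels: the weight vanishes unless all labels are nonnegative,
the conservation law `i+j=k+l` holds, and `l ≤ i`. -/
noncomputable def Wz (q t2 s2 : ℂ) (i j k l : ℤ) : ℂ :=
  if 0 ≤ i ∧ 0 ≤ j ∧ 0 ≤ l ∧ i + j = k + l ∧ l ≤ i then
    (s2 / t2) ^ l.toNat * qp q (s2 / t2) (i - l).toNat * qp q t2 l.toNat / qp q s2 i.toNat *
      (qp q q i.toNat / (qp q q (i - l).toNat * qp q q l.toNat))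
  else 0

/-- The one-variable skew inhomogeneous spin q-Whittaker function
`𝔽_{λ/μ}(κ | Ξ, S)`.  Here `a j` and `b j` are fixed square roots of `s_j` and `ξ_j`
(so `s_j = (a j)²`, `ξ_j = (b j)²`), `lam i = λ_{i+1}` and `mu i = μ_{i+1}` are the
(0-indexed) parts of the partitions, `s_j^{(1)} = a j · a (j+1) · b (j+1) / b j`.
It is defined as
`[(-τ_Ξ S)^μ/(-S)^λ]·[c_{τ_Ξ S}(μ)/c_S(λ)]·(κ s₀/ξ₀)^{λ₁-μ₁}
 (κ⁻¹s₁ξ₁;q)_{λ₁-μ₁}/(q;q)_{λ₁-μ₁}·ZW_{λ/μ}(κ)`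
with `ZW_{λ/μ}(κ) = ∏_{c≥1} W_{√(s_{c+1}ξ_{c+1}/κ), s_c^{(1)}}
 (m_c(μ'), λ_c-μ_c; m_c(λ'), λ_{c+1}-μ_{c+1})`. -/
noncomputable def F1 (q κ : ℂ) (a b : ℕ → ℂ) (lam mu : ℕ → ℕ) : ℂ :=
  ((∏' i : ℕ, (-(a i * a (i + 1) * b (i + 1) / b i)) ^ mu i) /
      (∏' i : ℕ, (-((a i) ^ 2)) ^ lam i)) *
  ((∏' i : ℕ, qp q ((a (i + 1) * a (i + 2) * b (i + 2) / b (i + 1)) ^ 2) (mu i - mu (i + 1)) /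
        qp q q (mu i - mu (i + 1))) /
     (∏' i : ℕ, qp q ((a (i + 1)) ^ 4) (lam i - lam (i + 1)) / qp q q (lam i - lam (i + 1)))) *
  ((κ * (a 0) ^ 2 / (b 0) ^ 2) ^ (lam 0 - mu 0) *
      qp q (κ⁻¹ * (a 1) ^ 2 * (b 1) ^ 2) (lam 0 - mu 0) / qp q q (lam 0 - mu 0)) *
  ∏' c : ℕ, Wz q ((a (c + 2)) ^ 2 * (b (c + 2)) ^ 2 / κ)
      ((a (c + 1) * a (c + 2) * b (c + 2) / b (c + 1)) ^ 2)
      ((mu c : ℤ) - (mu (c + 1) : ℤ)) ((lam c : ℤ) - (mu c : ℤ))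
      ((lam c : ℤ) - (lam (c + 1) : ℤ)) ((lam (c + 1) : ℤ) - (mu (c + 1) : ℤ))

/-! Write `𝔽_{λ/μ}` as a product over rows `t` of a local factor (the parts of the prefactors and
the weight `W` that involve rows `t`, `t + 1`) times the boundary term
`(κ s₀/ξ₀)^{λ₁-μ₁} (κ⁻¹s₁ξ₁;q)_{λ₁-μ₁}/(q;q)_{λ₁-μ₁}`. Under interlacing, `W` is an explicit
product of q-Pochhammer symbols, and the local factor of row `t` times the boundary term of row `t`
equals the `t`-th factor of the formula times the boundary term of row `t + 1`. As `λ` and `μ` have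
finitely many parts, the boundary terms telescope to `1`. If interlacing fails at row `t`, the
weight `W` of row `t` vanishes, hence so does `𝔽_{λ/μ}`. -/

open Finset

lemma qp_zero (q x : ℂ) : qp q x 0 = 1 := prod_range_zero _

lemma qp_self_ne_zero {q : ℂ} (hq : ∀ n : ℕ, 1 ≤ n → q ^ n ≠ 1) (n : ℕ) : qp q q n ≠ 0 :=
  prod_ne_zero_iff.mpr fun r _ => by
    rw [← pow_succ', sub_ne_zero]
    exact (hq (r + 1) r.succ_pos).symm

lemma Wz_zero (q t2 s2 : ℂ) : Wz q t2 s2 0 0 0 0 = 1 := by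
  simp [Wz, qp_zero]

lemma Wz_of_interlacing (q t2 s2 : ℂ) {l0 m0 l1 m1 : ℕ} (h1 : m1 ≤ l1) (h2 : l1 ≤ m0)
    (h3 : m0 ≤ l0) :
    Wz q t2 s2 ((m0 : ℤ) - m1) ((l0 : ℤ) - m0) ((l0 : ℤ) - l1) ((l1 : ℤ) - m1) =
      (s2 / t2) ^ (l1 - m1) * qp q (s2 / t2) (m0 - l1) * qp q t2 (l1 - m1) / qp q s2 (m0 - m1) *
        (qp q q (m0 - m1) / (qp q q (m0 - l1) * qp q q (l1 - m1))) := by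
  rw [Wz, if_pos (by omega)]
  congr <;> omega

lemma Wz_eq_zero_of_not_interlacing (q t2 s2 : ℂ) {l0 m0 l1 m1 : ℕ}
    (h : ¬ (m0 ≤ l0 ∧ l1 ≤ m0)) :
    Wz q t2 s2 ((m0 : ℤ) - m1) ((l0 : ℤ) - m0) ((l0 : ℤ) - l1) ((l1 : ℤ) - m1) = 0 :=
  if_neg (by omega)

lemma neg_mul_div_pow_div_neg_sq_pow {κ x y z : ℂ} (hx : x ≠ 0) (hz : z ≠ 0) {m l : ℕ}
    (h : m ≤ l) :
    (-(x * y / z)) ^ m / (-(x ^ 2)) ^ l * (κ * x ^ 2 / z ^ 2) ^ (l - m) =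
      (-κ) ^ (l - m) * (z ^ 2) ^ ((m : ℤ) - l) * (y / (x * z)) ^ m := by
  obtain ⟨d, rfl⟩ := Nat.exists_eq_add_of_le h
  have hxyz : -(x * y / z) = y / (x * z) * -(x ^ 2) := by field_simp
  have hκxz : κ * x ^ 2 / z ^ 2 = -κ * (z ^ 2)⁻¹ * -(x ^ 2) := by field_simp
  rw [Nat.add_sub_cancel_left, Nat.cast_add, sub_add_cancel_left, zpow_neg, zpow_natCast,
    hxyz, hκxz, mul_pow, mul_pow, mul_pow, pow_add, inv_pow]
  field_simp

section Factors

variable (q κ : ℂ) (a b : ℕ → ℂ) (lam mu : ℕ → ℕ)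

noncomputable def F1Factor (t : ℕ) : ℂ :=
  (-(a t * a (t + 1) * b (t + 1) / b t)) ^ mu t / (-(a t ^ 2)) ^ lam t *
    (qp q ((a (t + 1) * a (t + 2) * b (t + 2) / b (t + 1)) ^ 2) (mu t - mu (t + 1)) /
        qp q q (mu t - mu (t + 1)) /
      (qp q (a (t + 1) ^ 4) (lam t - lam (t + 1)) / qp q q (lam t - lam (t + 1)))) *
    Wz q (a (t + 2) ^ 2 * b (t + 2) ^ 2 / κ) ((a (t + 1) * a (t + 2) * b (t + 2) / b (t + 1)) ^ 2)
      ((mu t : ℤ) - mu (t + 1)) ((lam t : ℤ) - mu t) ((lam t : ℤ) - lam (t + 1))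
      ((lam (t + 1) : ℤ) - mu (t + 1))

noncomputable def F1Boundary (t : ℕ) : ℂ :=
  (κ * a t ^ 2 / b t ^ 2) ^ (lam t - mu t) *
    qp q (κ⁻¹ * a (t + 1) ^ 2 * b (t + 1) ^ 2) (lam t - mu t) / qp q q (lam t - mu t)

noncomputable def F1FormulaFactor (t : ℕ) : ℂ :=
  (-κ) ^ (lam t - mu t) * (b t ^ 2) ^ ((mu t : ℤ) - lam t) *
    (a (t + 1) * b (t + 1) / (a t * b t)) ^ mu t *
    qp q (κ⁻¹ * a (t + 1) ^ 2 * b (t + 1) ^ 2) (lam t - mu t) *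
    qp q (κ * a (t + 1) ^ 2 / b (t + 1) ^ 2) (mu t - lam (t + 1)) *
    qp q q (lam t - lam (t + 1)) /
    (qp q q (lam t - mu t) * qp q q (mu t - lam (t + 1)) *
      qp q (a (t + 1) ^ 4) (lam t - lam (t + 1)))

variable {q κ a b lam mu}

lemma F1Factor_eq_zero_of_not_interlacing {t : ℕ}
    (h : ¬ (mu t ≤ lam t ∧ lam (t + 1) ≤ mu t)) :
    F1Factor q κ a b lam mu t = 0 := by
  rw [F1Factor, Wz_eq_zero_of_not_interlacing _ _ _ h, mul_zero]

lemma F1Factor_mul_boundary (ha : ∀ j, a j ≠ 0) (hb : ∀ j, b j ≠ 0) (hκ : κ ≠ 0)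
    (hq : ∀ n : ℕ, 1 ≤ n → q ^ n ≠ 1) (hs : ∀ j n, qp q (a j ^ 4) n ≠ 0)
    (hs1 : ∀ j n, qp q ((a j * a (j + 1) * b (j + 1) / b j) ^ 2) n ≠ 0) {t : ℕ}
    (ht : mu t ≤ lam t ∧ lam (t + 1) ≤ mu t) (ht1 : mu (t + 1) ≤ lam (t + 1)) :
    F1Factor q κ a b lam mu t * F1Boundary q κ a b lam mu t =
      F1FormulaFactor q κ a b lam mu t * F1Boundary q κ a b lam mu (t + 1) := by
  have hratio : (a (t + 1) * a (t + 2) * b (t + 2) / b (t + 1)) ^ 2 /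
      (a (t + 2) ^ 2 * b (t + 2) ^ 2 / κ) = κ * a (t + 1) ^ 2 / b (t + 1) ^ 2 := by
    field_simp [ha (t + 2), hb (t + 2)]
  have hinv :
      a (t + 2) ^ 2 * b (t + 2) ^ 2 / κ = κ⁻¹ * a (t + 1 + 1) ^ 2 * b (t + 1 + 1) ^ 2 := by
    ring
  have hmon :=
    neg_mul_div_pow_div_neg_sq_pow (κ := κ) (y := a (t + 1) * b (t + 1)) (ha t) (hb t) ht.1
  rw [← mul_assoc] at hmon
  have hS : qp q ((a (t + 1) * a (t + 2) * b (t + 2) / b (t + 1)) ^ 2) (mu t - mu (t + 1)) ≠ 0 :=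
    hs1 (t + 1) _
  have hA := hs (t + 1) (lam t - lam (t + 1))
  have hQ := qp_self_ne_zero hq
  have := hQ (mu t - mu (t + 1))
  have := hQ (lam t - lam (t + 1))
  have := hQ (lam t - mu t)
  have := hQ (mu t - lam (t + 1))
  have := hQ (lam (t + 1) - mu (t + 1))
  rw [F1Factor, F1Boundary, F1FormulaFactor, F1Boundary, Wz_of_interlacing _ _ _ ht1 ht.2 ht.1,
    hratio, ← hmon, hinv]
  -- What is left is cancellation of common factors; hiding the atoms keeps `field_simp` from
  -- expanding them.
  generalize qp q ((a (t + 1) * a (t + 2) * b (t + 2) / b (t + 1)) ^ 2) = S at hS ⊢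
  generalize (-(a t * a (t + 1) * b (t + 1) / b t)) ^ mu t / (-a t ^ 2) ^ lam t = M
  generalize (κ * a t ^ 2 / b t ^ 2) ^ (lam t - mu t) = Z
  generalize κ * a (t + 1) ^ 2 / b (t + 1) ^ 2 = R
  field_simp

end Factors

lemma Finset.prod_range_mul_telescope {M : Type*} [CommMonoid M] {g h P : ℕ → M}
    (hgh : ∀ t, g t * P t = h t * P (t + 1)) (N : ℕ) :
    (∏ t ∈ range N, g t) * P 0 = (∏ t ∈ range N, h t) * P N := by
  induction N with
  | zero => simp
  | succ N ih =>
    rw [prod_range_succ, prod_range_succ, mul_right_comm, ih, mul_assoc, mul_comm (P N), hgh,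
      mul_assoc]

lemma tprod_eq_prod_range {M : Type*} [CommMonoid M] [TopologicalSpace M] {f : ℕ → M} {N : ℕ}
    (hf : ∀ i, N ≤ i → f i = 1) : ∏' i, f i = ∏ i ∈ range N, f i :=
  tprod_eq_prod fun i hi => hf i (by simpa using hi)

section FiniteSupport

variable {q κ : ℂ} {a b : ℕ → ℂ} {lam mu : ℕ → ℕ} {N : ℕ}

lemma F1_eq_prod_range_mul_boundary (hl : ∀ i, N ≤ i → lam i = 0)
    (hm : ∀ i, N ≤ i → mu i = 0) :
    F1 q κ a b lam mu =
      (∏ t ∈ range N, F1Factor q κ a b lam mu t) * F1Boundary q κ a b lam mu 0 := by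
  rw [F1, tprod_eq_prod_range (N := N), tprod_eq_prod_range (N := N), tprod_eq_prod_range (N := N),
    tprod_eq_prod_range (N := N), tprod_eq_prod_range (N := N)]
  · simp only [F1Factor, F1Boundary, prod_mul_distrib, prod_div_distrib]
    ring
  all_goals
    intro i hi
    simp [hl i hi, hm i hi, hl (i + 1) (by omega), hm (i + 1) (by omega), qp_zero, Wz_zero]

lemma F1Boundary_eq_one (hl : ∀ i, N ≤ i → lam i = 0) (hm : ∀ i, N ≤ i → mu i = 0) :
    F1Boundary q κ a b lam mu N = 1 := by
  simp [F1Boundary, hl N le_rfl, hm N le_rfl, qp_zero]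

lemma tprod_F1FormulaFactor (hl : ∀ i, N ≤ i → lam i = 0) (hm : ∀ i, N ≤ i → mu i = 0) :
    ∏' t, F1FormulaFactor q κ a b lam mu t =
      ∏ t ∈ range N, F1FormulaFactor q κ a b lam mu t :=
  tprod_eq_prod_range fun i hi => by
    simp [F1FormulaFactor, hl i hi, hm i hi, hl (i + 1) (by omega), qp_zero]

end FiniteSupport

theorem stmt8_general (q κ : ℂ) (a b : ℕ → ℂ) (lam mu : ℕ → ℕ)
    (hlam0 : ∃ N, ∀ i, N ≤ i → lam i = 0) (hmu0 : ∃ N, ∀ i, N ≤ i → mu i = 0)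
    (ha : ∀ j, a j ≠ 0) (hb : ∀ j, b j ≠ 0) (hκ : κ ≠ 0)
    (hq : ∀ n : ℕ, 1 ≤ n → q ^ n ≠ 1)
    (hs : ∀ j n, qp q ((a j) ^ 4) n ≠ 0)
    (hs1 : ∀ j n, qp q ((a j * a (j + 1) * b (j + 1) / b j) ^ 2) n ≠ 0) :
    ((∀ i, mu i ≤ lam i ∧ lam (i + 1) ≤ mu i) →
      F1 q κ a b lam mu
        = ∏' t : ℕ,
            ((-κ) ^ (lam t - mu t) * ((b t) ^ 2 : ℂ) ^ ((mu t : ℤ) - (lam t : ℤ)) *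
              ((a (t + 1) * b (t + 1)) / (a t * b t)) ^ mu t *
              qp q (κ⁻¹ * (a (t + 1)) ^ 2 * (b (t + 1)) ^ 2) (lam t - mu t) *
              qp q (κ * (a (t + 1)) ^ 2 / (b (t + 1)) ^ 2) (mu t - lam (t + 1)) *
              qp q q (lam t - lam (t + 1)) /
              (qp q q (lam t - mu t) * qp q q (mu t - lam (t + 1)) *
                qp q ((a (t + 1)) ^ 4) (lam t - lam (t + 1))))) ∧
    ((¬ ∀ i, mu i ≤ lam i ∧ lam (i + 1) ≤ mu i) → F1 q κ a b lam mu = 0) := by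
  obtain ⟨N₁, hN₁⟩ := hlam0
  obtain ⟨N₂, hN₂⟩ := hmu0
  have hsupp : ∀ M, ∃ N, M ≤ N ∧ (∀ i, N ≤ i → lam i = 0) ∧ (∀ i, N ≤ i → mu i = 0) :=
    fun M => ⟨N₁ + N₂ + M, by omega, fun i hi => hN₁ i (by omega), fun i hi => hN₂ i (by omega)⟩
  constructor
  · intro hint
    obtain ⟨N, -, hl, hm⟩ := hsupp 0
    have htelescope := prod_range_mul_telescope (P := F1Boundary q κ a b lam mu)
      (fun t => F1Factor_mul_boundary ha hb hκ hq hs hs1 (hint t) (hint (t + 1)).1) N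
    change F1 q κ a b lam mu = ∏' t, F1FormulaFactor q κ a b lam mu t
    rw [tprod_F1FormulaFactor hl hm, F1_eq_prod_range_mul_boundary hl hm, htelescope,
      F1Boundary_eq_one hl hm, mul_one]
  · intro hfail
    obtain ⟨i₀, hi₀⟩ := not_forall.mp hfail
    obtain ⟨N, hN, hl, hm⟩ := hsupp (i₀ + 1)
    rw [F1_eq_prod_range_mul_boundary hl hm,
      prod_eq_zero (mem_range.mpr hN) (F1Factor_eq_zero_of_not_interlacing hi₀), zero_mul]

/-- One-variable formula: if `μ ≺ λ` (interlacing) then `𝔽_{λ/μ}(κ|Ξ,S)` factorizes as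
`(-κ)^{|λ|-|μ|} ∏_{i≥1} ξ_{i-1}^{μ_i-λ_i} (s_iξ_i/(s_{i-1}ξ_{i-1}))^{μ_i/2}
 (κ⁻¹s_iξ_i;q)_{λ_i-μ_i}(κ s_i/ξ_i;q)_{μ_i-λ_{i+1}}(q;q)_{λ_i-λ_{i+1}}
 /[(q;q)_{λ_i-μ_i}(q;q)_{μ_i-λ_{i+1}}(s_i²;q)_{λ_i-λ_{i+1}}]`,
and otherwise `𝔽_{λ/μ}(κ|Ξ,S) = 0`.  (The factor `(-κ)^{|λ|-|μ|}` is distributed into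
the product as `(-κ)^{λ_i-μ_i}`.) -/
theorem stmt8 (q κ : ℂ) (a b : ℕ → ℂ) (lam mu : ℕ → ℕ)
    (hlam : ∀ i, lam (i + 1) ≤ lam i) (hmu : ∀ i, mu (i + 1) ≤ mu i)
    (hlam0 : ∃ N, ∀ i, N ≤ i → lam i = 0) (hmu0 : ∃ N, ∀ i, N ≤ i → mu i = 0)
    (ha : ∀ j, a j ≠ 0) (hb : ∀ j, b j ≠ 0) (hκ : κ ≠ 0)
    (hq : ∀ n : ℕ, 1 ≤ n → q ^ n ≠ 1)
    (hs : ∀ j n, qp q ((a j) ^ 4) n ≠ 0)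
    (hs1 : ∀ j n, qp q ((a j * a (j + 1) * b (j + 1) / b j) ^ 2) n ≠ 0) :
    ((∀ i, mu i ≤ lam i ∧ lam (i + 1) ≤ mu i) →
      F1 q κ a b lam mu
        = ∏' t : ℕ,
            ((-κ) ^ (lam t - mu t) * ((b t) ^ 2 : ℂ) ^ ((mu t : ℤ) - (lam t : ℤ)) *
              ((a (t + 1) * b (t + 1)) / (a t * b t)) ^ mu t *
              qp q (κ⁻¹ * (a (t + 1)) ^ 2 * (b (t + 1)) ^ 2) (lam t - mu t) *
              qp q (κ * (a (t + 1)) ^ 2 / (b (t + 1)) ^ 2) (mu t - lam (t + 1)) *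
              qp q q (lam t - lam (t + 1)) /
              (qp q q (lam t - mu t) * qp q q (mu t - lam (t + 1)) *
                qp q ((a (t + 1)) ^ 4) (lam t - lam (t + 1))))) ∧
    ((¬ ∀ i, mu i ≤ lam i ∧ lam (i + 1) ≤ mu i) → F1 q κ a b lam mu = 0) :=
  stmt8_general q κ a b lam mu hlam0 hmu0 ha hb hκ hq hs hs1
end
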